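/- arXiv:math/0603065 — 3 statements merged into one kernel-verified Lean document; each statement's English description precedes it below -/
import Mathlib

section
/- Every continuous group homomorphism ρ : ℂˣ → ℂˣ is of the form z ↦ z^{-m}·z̄^{-n}: there exist complex numbers m and n with m − n ∈ ℤ such that for every nonzero complex number z one has ρ(z) = exp(−m·log z − n·conj(log z)). -/
open Complex

/-- A continuous nonvanishing multiplicative map `f : ℂ → ℂ` (from the additive group)
lifts through `exp` to a continuous additive map. -/
lemma exists_continuous_additive_lift (f : ℂ → ℂ) (hcont : Continuous f)
    (hne : ∀ w, f w ≠ 0) (hmul : ∀ w v, f (w + v) = f w * f v) :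
    ∃ L : ℂ →+ ℂ, Continuous L ∧ ∀ w, Complex.exp (L w) = f w := by
  have hf0 : f 0 = 1 := by
    have h := hmul 0 0
    rw [add_zero] at h
    field_simp [hne 0] at h
    exact h.symm
  -- choose δ
  obtain ⟨δ, hδpos, hδ⟩ : ∃ δ > 0, ∀ w : ℂ, ‖w‖ < δ → ‖f w - 1‖ < 1/2 := by
    have h := Metric.continuousAt_iff.1 (hcont.continuousAt (x := 0)) (1/2) (by norm_num)
    obtain ⟨δ, hδpos, hδ⟩ := h
    refine ⟨δ, hδpos, fun w hw => ?_⟩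
    have := hδ (by simpa [dist_eq_norm] using hw)
    simpa [hf0, dist_eq_norm] using this
  set ℓ : ℂ → ℂ := fun w => Complex.log (f w) with hℓ
  have hexpℓ : ∀ w, Complex.exp (ℓ w) = f w := fun w => Complex.exp_log (hne w)
  have him : ∀ w : ℂ, ‖w‖ < δ → |(ℓ w).im| < Real.pi / 2 := by
    intro w hw
    have h := hδ w hw
    have hre : |(f w - 1).re| ≤ ‖f w - 1‖ := Complex.abs_re_le_norm _
    have : (0:ℝ) < (f w).re := by
      simp only [Complex.sub_re, Complex.one_re] at hre
      have := abs_le.1 (hre.trans h.le)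
      linarith [this.1]
    simpa [hℓ, Complex.log_im] using Complex.abs_arg_lt_pi_div_two_iff.2 (Or.inl this)
  -- additivity of ℓ for small arguments
  have key : ∀ u v : ℂ, ‖u‖ < δ → ‖v‖ < δ → ‖u + v‖ < δ →
      ℓ (u + v) = ℓ u + ℓ v := by
    intro u v hu hv huv
    have hexp : Complex.exp (ℓ (u + v)) = Complex.exp (ℓ u + ℓ v) := by
      rw [Complex.exp_add, hexpℓ, hexpℓ, hexpℓ, hmul]
    obtain ⟨k, hk⟩ := Complex.exp_eq_exp_iff_exists_int.1 hexp
    have him1 := him u hu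
    have him2 := him v hv
    have him3 := him (u + v) huv
    have himk : (ℓ (u + v)).im = (ℓ u).im + (ℓ v).im + (k : ℝ) * (2 * Real.pi) := by
      have := congrArg Complex.im hk
      simpa [Complex.add_im, Complex.mul_im] using this
    have hk0 : k = 0 := by
      by_contra h
      have h1 : (1:ℝ) ≤ |(k:ℝ)| := by
        rw [← Int.cast_abs]
        exact_mod_cast Int.one_le_abs (by simpa using h)
      have hpi := Real.pi_pos
      have : |(k:ℝ) * (2 * Real.pi)| < 2 * Real.pi := by
        have : (k:ℝ) * (2 * Real.pi) = (ℓ (u+v)).im - (ℓ u).im - (ℓ v).im := by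
          linarith [himk]
        rw [this]
        have := abs_sub (ℓ (u+v)).im ((ℓ u).im + (ℓ v).im)
        calc |(ℓ (u+v)).im - (ℓ u).im - (ℓ v).im|
            ≤ |(ℓ (u+v)).im| + |(ℓ u).im| + |(ℓ v).im| := by
              have h1 := abs_sub (ℓ (u+v)).im (ℓ u).im
              calc |(ℓ (u+v)).im - (ℓ u).im - (ℓ v).im|
                  ≤ |(ℓ (u+v)).im - (ℓ u).im| + |(ℓ v).im| := abs_sub _ _
                _ ≤ |(ℓ (u+v)).im| + |(ℓ u).im| + |(ℓ v).im| := by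
                    have := abs_sub (ℓ (u+v)).im (ℓ u).im
                    linarith
          _ < 2 * Real.pi := by linarith
      rw [abs_mul, abs_of_pos (by positivity : (0:ℝ) < 2 * Real.pi)] at this
      nlinarith [Real.pi_pos]
    rw [hk0] at hk
    simpa using hk
  -- doubling
  have hdouble : ∀ u : ℂ, ‖u‖ < δ → ℓ u = 2 * ℓ (u / 2) := by
    intro u hu
    have h2 : ‖u / 2‖ < δ := by
      rw [norm_div]
      simp only [Complex.norm_ofNat]
      linarith [norm_nonneg u]
    have := key (u/2) (u/2) h2 h2 (by rwa [add_halves])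
    rw [add_halves] at this
    rw [this]; ring
  set g : ℕ → ℂ → ℂ := fun n w => 2 ^ n * ℓ (w / 2 ^ n) with hg
  have hnorm_div : ∀ (w : ℂ) (n : ℕ), ‖w / 2 ^ n‖ = ‖w‖ / 2 ^ n := by
    intro w n
    rw [norm_div, norm_pow]
    norm_num
  have stab : ∀ (n m : ℕ) (w : ℂ), n ≤ m → ‖w‖ < δ * 2 ^ n → g m w = g n w := by
    intro n m w hnm hw
    induction m, hnm using Nat.le_induction with
    | base => rfl
    | succ m hnm ih =>
      have hwm : ‖w / 2 ^ m‖ < δ := by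
        rw [hnorm_div]
        rw [div_lt_iff₀ (by positivity)]
        calc ‖w‖ < δ * 2 ^ n := hw
          _ ≤ δ * 2 ^ m := by
              have : (2:ℝ) ^ n ≤ 2 ^ m := pow_le_pow_right₀ (by norm_num) hnm
              nlinarith
      have hd := hdouble (w / 2 ^ m) hwm
      have heq : w / 2 ^ m / 2 = w / 2 ^ (m + 1) := by
        rw [div_div, ← pow_succ]
      rw [heq] at hd
      calc g (m+1) w = 2 ^ (m+1) * ℓ (w / 2 ^ (m+1)) := rfl
        _ = 2 ^ m * (2 * ℓ (w / 2 ^ (m+1))) := by ring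
        _ = 2 ^ m * ℓ (w / 2 ^ m) := by rw [← hd]
        _ = g m w := rfl
        _ = g n w := ih
  -- choose N
  have hN : ∀ w : ℂ, ∃ n : ℕ, ‖w‖ < δ * 2 ^ n := by
    intro w
    obtain ⟨n, hn⟩ := pow_unbounded_of_one_lt (‖w‖ / δ) (by norm_num : (1:ℝ) < 2)
    exact ⟨n, by rwa [div_lt_iff₀ hδpos, mul_comm] at hn⟩
  choose N hNlt using hN
  set L : ℂ → ℂ := fun w => g (N w) w with hL
  have hLg : ∀ (w : ℂ) (m : ℕ), N w ≤ m → L w = g m w := by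
    intro w m hm
    rw [hL]
    exact (stab (N w) m w hm (hNlt w)).symm
  -- additivity of L
  have hLadd : ∀ w v : ℂ, L (w + v) = L w + L v := by
    intro w v
    set M : ℕ := max (N w) (max (N v) (N (w + v))) with hM
    have hMw : N w ≤ M := le_max_left _ _
    have hMv : N v ≤ M := le_trans (le_max_left _ _) (le_max_right _ _)
    have hMwv : N (w + v) ≤ M := le_trans (le_max_right _ _) (le_max_right _ _)
    have hsm : ∀ u : ℂ, N u ≤ M → ‖u / 2 ^ M‖ < δ := by
      intro u hu
      rw [hnorm_div, div_lt_iff₀ (by positivity)]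
      calc ‖u‖ < δ * 2 ^ (N u) := hNlt u
        _ ≤ δ * 2 ^ M := by
            have : (2:ℝ) ^ (N u) ≤ 2 ^ M := pow_le_pow_right₀ (by norm_num) hu
            nlinarith
    have hadd : (w + v) / 2 ^ M = w / 2 ^ M + v / 2 ^ M := add_div w v _
    have hk := key (w / 2 ^ M) (v / 2 ^ M) (hsm w hMw) (hsm v hMv)
      (by rw [← hadd]; exact hsm (w + v) hMwv)
    rw [hLg (w+v) M hMwv, hLg w M hMw, hLg v M hMv]
    simp only [hg]
    rw [hadd, hk]
    ring
  -- exp property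
  have hfnat : ∀ (n : ℕ) (x : ℂ), f ((n : ℂ) * x) = f x ^ n := by
    intro n x
    induction n with
    | zero => simpa using hf0
    | succ n ih =>
      have : ((n : ℂ) + 1) * x = (n : ℂ) * x + x := by ring
      push_cast
      rw [this, hmul, ih, pow_succ]
  have hexpL : ∀ w, Complex.exp (L w) = f w := by
    intro w
    have hgeq : L w = ((2 ^ (N w) : ℕ) : ℂ) * ℓ (w / ((2 ^ (N w) : ℕ) : ℂ)) := by
      show g (N w) w = _
      push_cast
      rfl
    rw [hgeq, Complex.exp_nat_mul, hexpℓ, ← hfnat]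
    congr 1
    have hne2 : (((2 ^ (N w) : ℕ)) : ℂ) ≠ 0 := Nat.cast_ne_zero.2 (by positivity)
    field_simp
  -- continuity of L
  have hLcont0 : ContinuousAt L 0 := by
    have hslit : f 0 ∈ Complex.slitPlane := by
      rw [hf0]; exact Complex.one_mem_slitPlane
    have hℓcont : ContinuousAt ℓ 0 :=
      (continuousAt_clog hslit).comp hcont.continuousAt
    have heq : L =ᶠ[nhds 0] ℓ := by
      filter_upwards [Metric.ball_mem_nhds (0:ℂ) hδpos] with w hw
      have hw' : ‖w‖ < δ * 2 ^ 0 := by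
        simpa [dist_eq_norm] using hw
      have h0 : L w = g 0 w := stab 0 (N w) w (Nat.zero_le _) hw'
      rw [h0]
      show (2:ℂ) ^ (0:ℕ) * ℓ (w / 2 ^ (0:ℕ)) = ℓ w
      simp
    exact hℓcont.congr heq.symm
  refine ⟨AddMonoidHom.mk' L hLadd, ?_, hexpL⟩
  exact continuous_of_continuousAt_zero (AddMonoidHom.mk' L hLadd)
    (by simpa using hLcont0)

/-- Every continuous group homomorphism `ρ : ℂˣ → ℂˣ` is of the form
`z ↦ z^{-m}·z̄^{-n}`: there exist complex numbers `m` and `n` with `m - n ∈ ℤ`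
such that for every nonzero complex number `z` one has
`ρ(z) = exp(-m·log z - n·conj(log z))`. -/
theorem continuous_char_units_complex_eq_exp
    (ρ : ℂˣ →* ℂˣ) (hρ : Continuous ρ) :
    ∃ m n : ℂ, (∃ k : ℤ, m - n = (k : ℂ)) ∧
      ∀ z : ℂˣ, ((ρ z : ℂ)) =
        Complex.exp (-m * Complex.log (z : ℂ)
          - n * (starRingEnd ℂ) (Complex.log (z : ℂ))) := by
  -- the composition with exp
  set E : ℂ → ℂˣ := fun w => Units.mk0 (Complex.exp w) (Complex.exp_ne_zero w) with hE
  have hEcont : Continuous E := by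
    apply Units.continuous_iff.2
    constructor
    · exact Complex.continuous_exp
    · show Continuous fun w : ℂ => (((E w)⁻¹ : ℂˣ) : ℂ)
      have : ∀ w : ℂ, (((E w)⁻¹ : ℂˣ) : ℂ) = Complex.exp (-w) := by
        intro w
        simp [hE, ← Complex.exp_neg]
      simp only [this]
      exact Complex.continuous_exp.comp continuous_neg
  set f : ℂ → ℂ := fun w => ((ρ (E w) : ℂˣ) : ℂ) with hf
  have hfcont : Continuous f := Units.continuous_val.comp (hρ.comp hEcont)
  have hfne : ∀ w, f w ≠ 0 := fun w => Units.ne_zero _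
  have hfmul : ∀ w v, f (w + v) = f w * f v := by
    intro w v
    have hEmul : E (w + v) = E w * E v := by
      ext
      simp [hE, Complex.exp_add]
    rw [hf]
    simp only [hEmul, map_mul, Units.val_mul]
  obtain ⟨L, hLcont, hLexp⟩ := exists_continuous_additive_lift f hfcont hfne hfmul
  -- L is real-linear
  set Llin : ℂ →L[ℝ] ℂ := L.toRealLinearMap hLcont with hLlin
  have hLlin_apply : ∀ w, Llin w = L w := fun w => rfl
  set a : ℂ := (L 1 - I * L I) / 2 with ha
  set b : ℂ := (L 1 + I * L I) / 2 with hb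
  have hLform : ∀ w : ℂ, L w = a * w + b * (starRingEnd ℂ) w := by
    intro w
    have hw : w = (w.re : ℝ) • (1 : ℂ) + (w.im : ℝ) • I := by
      simp [Complex.real_smul, Complex.re_add_im]
    have h1 : L w = (w.re : ℝ) • L 1 + (w.im : ℝ) • L I := by
      conv_lhs => rw [hw]
      rw [← hLlin_apply, ← hLlin_apply, ← hLlin_apply,
        map_add, map_smul, map_smul]
    rw [h1]
    have hconj : (starRingEnd ℂ) w = (w.re : ℂ) - (w.im : ℂ) * I := by
      rw [Complex.ext_iff]
      simp
    rw [hconj, ha, hb, Complex.real_smul, Complex.real_smul]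
    have hw' : w = (w.re : ℂ) + (w.im : ℂ) * I := (Complex.re_add_im w).symm
    linear_combination ((L I * I - L 1)/2) * hw' + ((w.im : ℂ) * L I) * Complex.I_sq
  -- the integrality condition
  obtain ⟨k, hk⟩ : ∃ k : ℤ, a - b = (k : ℂ) := by
    have hE2pi : E (2 * Real.pi * I) = 1 := by
      ext
      simp [hE, Complex.exp_two_pi_mul_I]
    have h1 : f (2 * Real.pi * I) = 1 := by
      rw [hf]
      simp only [hE2pi, map_one, Units.val_one]
    have h2 : Complex.exp (L (2 * Real.pi * I)) = 1 := by rw [hLexp, h1]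
    obtain ⟨k, hk⟩ := Complex.exp_eq_one_iff.1 h2
    refine ⟨k, ?_⟩
    rw [hLform] at hk
    have hconj : (starRingEnd ℂ) (2 * Real.pi * I) = -(2 * Real.pi * I) := by
      rw [Complex.ext_iff]
      simp
    rw [hconj] at hk
    have h2piI : (2 * (Real.pi:ℂ) * I) ≠ 0 := by
      simp [Real.pi_ne_zero, Complex.I_ne_zero]
    have : (a - b) * (2 * (Real.pi:ℂ) * I) = (k:ℂ) * (2 * (Real.pi:ℂ) * I) := by
      rw [← hk]; ring
    exact mul_right_cancel₀ h2piI this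
  refine ⟨-a, -b, ⟨-k, by push_cast; rw [← hk]; ring⟩, ?_⟩
  intro z
  have hz : E (Complex.log (z : ℂ)) = z := by
    ext
    simp [hE, Complex.exp_log (Units.ne_zero z)]
  have : ((ρ z : ℂ)) = f (Complex.log (z : ℂ)) := by
    have h' : f (Complex.log (z : ℂ)) = ((ρ (E (Complex.log (z : ℂ))) : ℂ)) := rfl
    rw [h', hz]
  rw [this, ← hLexp, hLform]
  congr 1
  ring
end

section
/- For every continuous group homomorphism ρ : ℂˣ → ℂˣ there exist a complex number s and an integer d such that for every nonzero complex number z one has ρ(z) = |z|^s · (z/|z|)^d, where |z|^s := exp(s · log|z|) with the real logarithm of the positive real number |z|, and (z/|z|)^d is the d-th integer power of the unimodular number z/|z|. -/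
open MeasureTheory intervalIntegral

lemma exists_exp_of_continuous_hom (F : ℝ → ℂ) (hF : Continuous F)
    (h1 : F 0 = 1) (hmul : ∀ x y, F (x + y) = F x * F y) :
    ∃ c : ℂ, ∀ x : ℝ, F x = Complex.exp (c * x) := by
  have hint : ∀ a b : ℝ, IntervalIntegrable F volume a b := fun a b =>
    hF.intervalIntegrable a b
  obtain ⟨Φ, hΦdef⟩ : ∃ Φ : ℝ → ℂ, Φ = fun x => ∫ t in (0:ℝ)..x, F t := ⟨_, rfl⟩
  have hΦ : ∀ x : ℝ, HasDerivAt Φ (F x) x := fun x => by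
    rw [hΦdef]
    exact intervalIntegral.integral_hasDerivAt_right (hint 0 x)
      (hF.stronglyMeasurableAtFilter _ _) hF.continuousAt
  have hex : ∃ a : ℝ, Φ a ≠ 0 := by
    by_contra h
    push_neg at h
    have hΦ0 : Φ = fun _ => (0 : ℂ) := funext h
    have := (hΦ 0).unique (by rw [hΦ0]; exact hasDerivAt_const _ _)
    rw [h1] at this
    exact one_ne_zero this
  obtain ⟨a, hC⟩ := hex
  obtain ⟨C, hCdef⟩ : ∃ C : ℂ, C = Φ a := ⟨_, rfl⟩
  rw [← hCdef] at hC
  have key : ∀ x : ℝ, F x * C = Φ (x + a) - Φ x := by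
    intro x
    have h := intervalIntegral.integral_add_adjacent_intervals (hint 0 x) (hint x (x + a))
    have e1 : Φ (x + a) = ∫ t in (0:ℝ)..(x + a), F t := by rw [hΦdef]
    have e2 : Φ x = ∫ t in (0:ℝ)..x, F t := by rw [hΦdef]
    have h3 : (∫ t in (0:ℝ)..a, F (x + t)) = ∫ t in x..(x + a), F t := by
      simpa using intervalIntegral.integral_comp_add_left F x (a := 0) (b := a)
    have h4 : (∫ t in (0:ℝ)..a, F (x + t)) = F x * C := by
      simp_rw [hmul x]
      rw [intervalIntegral.integral_const_mul, hCdef, hΦdef]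
    rw [e1, e2, ← h, ← h3, h4]
    ring
  obtain ⟨c, hcdef⟩ : ∃ c : ℂ, c = (F a - 1) / C := ⟨_, rfl⟩
  have hd : ∀ x : ℝ, HasDerivAt F (c * F x) x := by
    intro x
    have hFx : F = fun y : ℝ => (Φ (y + a) - Φ y) / C := by
      funext y
      rw [eq_div_iff hC, key]
    have d1 : HasDerivAt (fun y : ℝ => Φ (y + a)) (F (x + a)) x :=
      HasDerivAt.comp_add_const x a (hΦ (x + a))
    have d2 : HasDerivAt (fun y : ℝ => (Φ (y + a) - Φ y) / C)
        ((F (x + a) - F x) / C) x := (d1.sub (hΦ x)).div_const C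
    have d3 : HasDerivAt F ((F (x + a) - F x) / C) x := by
      rwa [← hFx] at d2
    convert d3 using 1
    rw [hmul x a, hcdef]
    field_simp
  have hG : ∀ x : ℝ, HasDerivAt (fun x : ℝ => F x * Complex.exp (-(c * x))) 0 x := by
    intro x
    have he : HasDerivAt (fun y : ℝ => Complex.exp (-(c * y)))
        (Complex.exp (-(c * x)) * (-c)) x := by
      have h0 : HasDerivAt (fun w : ℂ => Complex.exp (-(c * w)))
          (Complex.exp (-(c * (x:ℂ))) * (-c)) (x : ℂ) := by
        have := (((hasDerivAt_id (x:ℂ)).const_mul c).neg).cexp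
        simpa using this
      exact h0.comp_ofReal
    have : HasDerivAt (fun y : ℝ => F y * Complex.exp (-(c * y)))
        (c * F x * Complex.exp (-(c * x)) + F x * (Complex.exp (-(c * x)) * -c)) x :=
      (hd x).mul he
    convert this using 1
    ring
  have hconst : ∀ x : ℝ, F x * Complex.exp (-(c * x)) = 1 := by
    intro x
    have := is_const_of_deriv_eq_zero (f := fun x : ℝ => F x * Complex.exp (-(c * x)))
      (fun y => (hG y).differentiableAt) (fun y => (hG y).deriv) x 0
    simpa [h1] using this
  refine ⟨c, fun x => ?_⟩
  have h := hconst x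
  calc F x = F x * Complex.exp (-(c * x)) * Complex.exp (c * x) := by
        rw [mul_assoc, ← Complex.exp_add]; simp
    _ = Complex.exp (c * x) := by rw [h, one_mul]


/-- For every continuous group homomorphism `ρ : ℂˣ → ℂˣ` there exist a complex
number `s` and an integer `d` such that for every nonzero complex number `z`,
`ρ(z) = |z|^s · (z/|z|)^d`, where `|z|^s := exp(s · log|z|)` (real logarithm of
the positive real `|z|`) and `(z/|z|)^d` is the `d`-th integer power of the
unimodular number `z/|z|`. -/
theorem continuous_char_units_complex_polar_form
    (ρ : ℂˣ →* ℂˣ) (hρ : Continuous ρ) :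
    ∃ (s : ℂ) (d : ℤ), ∀ z : ℂˣ,
      ((ρ z : ℂ)) =
        Complex.exp (s * (Real.log (‖(z : ℂ)‖) : ℂ)) *
          ((z : ℂ) / (‖(z : ℂ)‖ : ℂ)) ^ d := by
  classical
  set E : ℂ → ℂˣ := fun w => Units.mk0 (Complex.exp w) (Complex.exp_ne_zero w) with hEdef
  have hEadd : ∀ v w : ℂ, E (v + w) = E v * E w := fun v w =>
    Units.ext (by simp [hEdef, Complex.exp_add])
  have hEcont : Continuous E := by
    apply Units.continuous_iff.2
    constructor
    · exact Complex.continuous_exp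
    · have : (fun w : ℂ => ((E w)⁻¹ : ℂ)) = fun w : ℂ => Complex.exp (-w) := by
        funext w
        simp [hEdef, ← Complex.exp_neg]
      exact (show Continuous (fun w : ℂ => ((E w)⁻¹ : ℂ)) from
        this ▸ Complex.continuous_exp.comp continuous_neg)
  have hval : Continuous (fun u : ℂˣ => (u : ℂ)) := Units.continuous_val
  -- radial character
  obtain ⟨s, hs⟩ := exists_exp_of_continuous_hom (fun x : ℝ => ((ρ (E (x : ℂ))) : ℂ))
    (hval.comp (hρ.comp (hEcont.comp Complex.continuous_ofReal)))
    (by simp only [Complex.ofReal_zero]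
        have : E 0 = 1 := Units.ext (by simp [hEdef])
        rw [this, map_one, Units.val_one])
    (fun x y => by
      show ((ρ (E ((x + y : ℝ) : ℂ))) : ℂ) =
        ((ρ (E ((x : ℝ) : ℂ))) : ℂ) * ((ρ (E ((y : ℝ) : ℂ))) : ℂ)
      rw [Complex.ofReal_add, hEadd, map_mul, Units.val_mul])
  -- angular character
  obtain ⟨c, hc⟩ := exists_exp_of_continuous_hom
    (fun θ : ℝ => ((ρ (E ((θ : ℂ) * Complex.I))) : ℂ))
    (hval.comp (hρ.comp (hEcont.comp (Complex.continuous_ofReal.mul continuous_const))))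
    (by simp only [Complex.ofReal_zero, zero_mul]
        have : E 0 = 1 := Units.ext (by simp [hEdef])
        rw [this, map_one, Units.val_one])
    (fun x y => by
      show ((ρ (E (((x + y : ℝ) : ℂ) * Complex.I))) : ℂ) =
        ((ρ (E (((x : ℝ) : ℂ) * Complex.I))) : ℂ) * ((ρ (E (((y : ℝ) : ℂ) * Complex.I))) : ℂ)
      rw [Complex.ofReal_add, add_mul, hEadd, map_mul, Units.val_mul])
  -- periodicity forces c = d * I
  have hper : Complex.exp (c * ((2 * Real.pi : ℝ) : ℂ)) = 1 := by
    rw [← hc (2 * Real.pi)]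
    have hE1 : E (((2 * Real.pi : ℝ) : ℂ) * Complex.I) = 1 := by
      apply Units.ext
      simp only [hEdef, Units.val_mk0, Units.val_one]
      push_cast
      exact Complex.exp_two_pi_mul_I
    rw [hE1, map_one, Units.val_one]
  obtain ⟨d, hd⟩ := Complex.exp_eq_one_iff.mp hper
  have hcd : c = (d : ℂ) * Complex.I := by
    have h2π : ((2 * Real.pi : ℝ) : ℂ) ≠ 0 :=
      Complex.ofReal_ne_zero.mpr (by positivity)
    apply mul_right_cancel₀ h2π
    rw [hd]
    push_cast
    ring
  refine ⟨s, d, fun z => ?_⟩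
  have hz0 : (z : ℂ) ≠ 0 := z.ne_zero
  have hr : 0 < ‖(z : ℂ)‖ := norm_pos_iff.mpr hz0
  set r : ℝ := ‖(z : ℂ)‖ with hrdef
  set θ : ℝ := Complex.arg (z : ℂ) with hθdef
  have hz : (z : ℂ) = (r : ℂ) * Complex.exp ((θ : ℂ) * Complex.I) := by
    rw [hrdef, hθdef]
    exact (Complex.norm_mul_exp_arg_mul_I (z : ℂ)).symm
  have hzsplit : z = E ((Real.log r : ℝ) : ℂ) * E ((θ : ℂ) * Complex.I) := by
    apply Units.ext
    rw [Units.val_mul]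
    have : Complex.exp ((Real.log r : ℝ) : ℂ) = (r : ℂ) := by
      rw [← Complex.ofReal_exp, Real.exp_log hr]
    simp only [hEdef, Units.val_mk0]
    rw [this, ← hz]
  have hrne : (r : ℂ) ≠ 0 := Complex.ofReal_ne_zero.mpr hr.ne'
  have hdiv : (z : ℂ) / (r : ℂ) = Complex.exp ((θ : ℂ) * Complex.I) := by
    rw [hz]
    exact mul_div_cancel_left₀ _ hrne
  rw [hdiv, ← Complex.exp_int_mul, hzsplit, map_mul, Units.val_mul, hs, hc, hcd]
  congr 2
  ring
end

section
/- Let f : ℂ → ℂ be an ℝ-linear map. Then exp(f(s + 2πi)) = exp(f(s)) for all s ∈ ℂ if and only if there exist m, n ∈ ℂ with m − n ∈ ℤ such that f(s) = −m·s − n·conj(s) for all s ∈ ℂ. -/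
/-- Let `f : ℂ → ℂ` be `ℝ`-linear.  Then `exp (f (s + 2πi)) = exp (f s)` for
all `s ∈ ℂ` if and only if there exist `m n : ℂ` with `m - n ∈ ℤ` such that
`f s = -m·s - n·conj s` for all `s ∈ ℂ`. -/
theorem real_linear_lift_periodicity_iff
    (f : ℂ →ₗ[ℝ] ℂ) :
    (∀ s : ℂ, Complex.exp (f (s + 2 * Real.pi * Complex.I))
        = Complex.exp (f s)) ↔
    ∃ m n : ℂ, (∃ k : ℤ, m - n = (k : ℂ)) ∧
      ∀ s : ℂ, f s = -m * s - n * (starRingEnd ℂ) s := by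
  have key : ∀ s : ℂ, f s = (s.re : ℂ) * f 1 + (s.im : ℂ) * f Complex.I := by
    intro s
    have hs : s = s.re • (1 : ℂ) + s.im • Complex.I := by
      simp [Complex.real_smul, Complex.re_add_im]
    nth_rewrite 1 [hs]
    rw [map_add, map_smul, map_smul, Complex.real_smul, Complex.real_smul]
  constructor
  · intro h
    have h0 := h 0
    rw [zero_add, map_zero, Complex.exp_zero] at h0
    have hf2 : f (2 * Real.pi * Complex.I) = (2 * Real.pi : ℝ) • f Complex.I := by
      rw [← map_smul]
      congr 1
      rw [Complex.real_smul]
      push_cast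
      ring
    rw [hf2, Complex.real_smul] at h0
    obtain ⟨k, hk⟩ := Complex.exp_eq_one_iff.mp h0
    have hπ : ((2 * Real.pi : ℝ) : ℂ) ≠ 0 := by
      simp [Real.pi_ne_zero]
    have hfI : f Complex.I = (k : ℂ) * Complex.I :=
      mul_left_cancel₀ hπ (by push_cast at hk ⊢; linear_combination hk)
    refine ⟨(-f 1 + Complex.I * f Complex.I) / 2, (-f 1 - Complex.I * f Complex.I) / 2,
      ⟨-k, ?_⟩, ?_⟩
    · rw [hfI]
      push_cast
      linear_combination (k : ℂ) * Complex.I_mul_I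
    · intro s
      have hc : (starRingEnd ℂ) s = (s.re : ℂ) - (s.im : ℂ) * Complex.I := by
        simp [Complex.ext_iff]
      have hs2 : s = (s.re : ℂ) + (s.im : ℂ) * Complex.I := (Complex.re_add_im s).symm
      rw [key s, hc]
      linear_combination ((-f 1 + Complex.I * f Complex.I) / 2) * hs2 +
        ((s.im : ℂ) * f Complex.I) * Complex.I_mul_I
  · rintro ⟨m, n, ⟨k, hk⟩, hf⟩ s
    rw [hf, hf]
    have hc : (starRingEnd ℂ) (s + 2 * Real.pi * Complex.I)
        = (starRingEnd ℂ) s - 2 * Real.pi * Complex.I := by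
      simp [map_add, map_mul, Complex.conj_I, Complex.conj_ofReal, map_ofNat]
      ring
    rw [hc]
    rw [Complex.exp_eq_exp_iff_exists_int]
    refine ⟨-k, ?_⟩
    push_cast
    linear_combination -2 * Real.pi * Complex.I * hk
end
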